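/- Let d ≥ 2, let q = (q₁,…,q_d) ∈ Δ_d with q₁ ≥ … ≥ q_d, and let ε ∈ (0,1]. Define p_{*,ε}(q) ∈ ℝ^d as follows: if q_d > ε, set p_{*,ε}(q) := (q₁+ε, q₂, …, q_{d−1}, q_d−ε); otherwise let ℓ ∈ {1,…,d−1} be the largest index with Q_ℓ := Σ_{j=d−ℓ+1}^d q_j ≤ ε; if ℓ = d−1 set p_{*,ε}(q) := (1,0,…,0); otherwise set p_{*,ε}(q) to have first entry q₁+ε, entries q_j in positions 2 ≤ j ≤ d−ℓ−1, entry q_{d−ℓ} − (ε − Q_ℓ) in position d−ℓ, and 0 in positions ≥ d−ℓ+1. Then p_{*,ε}(q) ∈ B_ε(q), and p ≺ p_{*,ε}(q) for every p ∈ B_ε(q). -/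

import Mathlib

open scoped BigOperators

noncomputable section

/-- `Qsum q ℓ = Σ_{j=d−ℓ+1}^d q_j`, the sum of the `ℓ` smallest (last) entries of the
non-increasing vector `q`. -/
noncomputable def Qsum {d : ℕ} (q : Fin d → ℝ) (ℓ : ℕ) : ℝ :=
  ∑ i : Fin d, if d - ℓ ≤ (i : ℕ) then q i else 0

/-- Sum of the `k` largest entries of a vector (counted with multiplicity). -/
noncomputable def kMaxSum {d : ℕ} (v : Fin d → ℝ) (k : ℕ) : ℝ :=
  sSup ((fun s : Finset (Fin d) => ∑ i ∈ s, v i) '' {s | s.card = k})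

/-- Vector majorization `x ≺ y`: the partial sums of the `k` largest entries of `x` are at
most those of `y` for `k = 1, …, d − 1`, and the total sums agree. -/
def vMaj {d : ℕ} (x y : Fin d → ℝ) : Prop :=
  (∀ k, 1 ≤ k → k ≤ d - 1 → kMaxSum x k ≤ kMaxSum y k) ∧ (∑ i, x i) = (∑ i, y i)

/-
For `w ∈ B_ε(q)` and any set `s` of `k` indices, `∑_{i ∈ s} w_i ≤ min 1 (q_1 + ⋯ + q_k + ε)`:
the first bound because `w` is a probability vector, the second because `∑_{i ∈ s} q_i` is at
most the sum of the `k` largest entries of `q` and `∑_{i ∈ s} (w_i - q_i)` is at most half the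
`ℓ¹`-distance. The vector `p_{*,ε}(q)` attains this bound with its first `k` entries for every
`k`, since it moves mass `ε` (or, when `ℓ = d - 1`, all the mass outside `q_1`) from the tail onto
the first entry. As it exceeds `q` only in the first entry, its distance to `q` is exactly the
moved mass.
-/

open Finset

section
variable {d : ℕ}

def headSum (v : Fin d → ℝ) (k : ℕ) : ℝ := ∑ i : Fin d with i.val < k, v i

lemma headSum_add_sum_filter (v : Fin d → ℝ) {a k : ℕ} (hak : a ≤ k) :
    headSum v a + ∑ i : Fin d with a ≤ i.val ∧ i.val < k, v i = headSum v k := by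
  rw [headSum, headSum, ← sum_filter_add_sum_filter_not {i : Fin d | i.val < k} (·.val < a),
    filter_filter, filter_filter]
  congr 1 <;> refine sum_congr ?_ fun _ _ => rfl <;> ext i <;>
    simp only [mem_filter, mem_univ, true_and] <;> omega

lemma headSum_succ (v : Fin d → ℝ) {k : ℕ} (hk : k < d) :
    headSum v (k + 1) = headSum v k + v ⟨k, hk⟩ := by
  rw [← headSum_add_sum_filter v k.le_succ, sum_eq_single_of_mem (⟨k, hk⟩ : Fin d) (by simp)]
  intro i hi hik
  simp only [mem_filter, mem_univ, true_and] at hi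
  exact absurd (Fin.ext (by simp only; omega)) hik

lemma headSum_one (v : Fin d → ℝ) (hd : 0 < d) : headSum v 1 = v ⟨0, hd⟩ := by
  rw [headSum_succ v hd]
  simp [headSum]

lemma headSum_eq_sum_of_le (v : Fin d → ℝ) {k : ℕ} (hk : d ≤ k) : headSum v k = ∑ i, v i := by
  rw [headSum, filter_true_of_mem fun i _ => by omega]

lemma headSum_add_Qsum (v : Fin d → ℝ) (ℓ : ℕ) : headSum v (d - ℓ) + Qsum v ℓ = ∑ i, v i := by
  rw [headSum, Qsum, ← sum_filter,
    ← sum_filter_add_sum_filter_not univ (fun i : Fin d => i.val < d - ℓ)]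
  simp only [not_lt]

lemma headSum_eq_one_sub_Qsum {v : Fin d → ℝ} (hv : ∑ i, v i = 1) (ℓ : ℕ) :
    headSum v (d - ℓ) = 1 - Qsum v ℓ := by
  linarith [headSum_add_Qsum v ℓ]

lemma headSum_sub_headSum_of_eqOn {v w : Fin d → ℝ} {a k : ℕ} (hak : a ≤ k)
    (h : ∀ i : Fin d, a ≤ i.val → i.val < k → v i = w i) :
    headSum v k - headSum w k = headSum v a - headSum w a := by
  rw [← headSum_add_sum_filter v hak, ← headSum_add_sum_filter w hak,
    sum_congr rfl fun i hi => h i (mem_filter.1 hi).2.1 (mem_filter.1 hi).2.2]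
  ring

lemma headSum_eq_of_eq_zero {v : Fin d → ℝ} {a k : ℕ} (hak : a ≤ k)
    (h : ∀ i : Fin d, a ≤ i.val → i.val < k → v i = 0) : headSum v k = headSum v a := by
  have hzero (j : ℕ) : headSum (0 : Fin d → ℝ) j = 0 := by simp [headSum]
  simpa [hzero] using headSum_sub_headSum_of_eqOn (w := 0) hak h

lemma le_kMaxSum (v : Fin d → ℝ) {s : Finset (Fin d)} {k : ℕ} (hs : #s = k) :
    ∑ i ∈ s, v i ≤ kMaxSum v k :=
  le_csSup (Set.toFinite _).bddAbove ⟨s, hs, rfl⟩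

lemma headSum_le_kMaxSum (v : Fin d → ℝ) {k : ℕ} (hk : k ≤ d) : headSum v k ≤ kMaxSum v k :=
  le_kMaxSum v (by rw [Fin.card_filter_val_lt, min_eq_right hk])

lemma kMaxSum_le {v : Fin d → ℝ} {k : ℕ} (hk : k ≤ d) {c : ℝ}
    (h : ∀ s : Finset (Fin d), #s = k → ∑ i ∈ s, v i ≤ c) : kMaxSum v k ≤ c := by
  obtain ⟨t, -, ht⟩ := exists_subset_card_eq (show k ≤ #(univ : Finset (Fin d)) by simpa using hk)
  refine csSup_le ⟨_, t, ht, rfl⟩ ?_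
  rintro x ⟨s, hs, rfl⟩
  exact h s hs

lemma kMaxSum_le_sum {v : Fin d → ℝ} (hv : ∀ i, 0 ≤ v i) {k : ℕ} (hk : k ≤ d) :
    kMaxSum v k ≤ ∑ i, v i :=
  kMaxSum_le hk fun _ _ => sum_le_univ_sum_of_nonneg hv

lemma sum_le_headSum_of_antitone {v : Fin d → ℝ} (hv : Antitone v) {s : Finset (Fin d)} {k : ℕ}
    (hk : k < d) (hs : #s = k) : ∑ i ∈ s, v i ≤ headSum v k := by
  set t : Finset (Fin d) := {i | i.val < k}
  have hcard : #(s \ t) = #(t \ s) :=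
    card_sdiff_comm (by rw [hs, Fin.card_filter_val_lt, min_eq_right hk.le])
  have hout : ∑ i ∈ s \ t, v i ≤ #(s \ t) • v ⟨k, hk⟩ :=
    sum_le_card_nsmul _ _ _ fun i hi => hv (by simp [t] at hi; exact Fin.le_def.2 hi.2)
  have hin : #(t \ s) • v ⟨k, hk⟩ ≤ ∑ i ∈ t \ s, v i :=
    card_nsmul_le_sum _ _ _ fun i hi => hv (by simp [t] at hi; exact Fin.le_def.2 hi.1.le)
  calc ∑ i ∈ s, v i = ∑ i ∈ s ∩ t, v i + ∑ i ∈ s \ t, v i := (sum_inter_add_sum_sdiff s t v).symm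
    _ ≤ ∑ i ∈ t ∩ s, v i + ∑ i ∈ t \ s, v i := by
      rw [inter_comm]; linarith [hcard ▸ hout]
    _ = headSum v k := sum_inter_add_sum_sdiff t s v

lemma sum_sub_le_half_sum_abs_sub {w q : Fin d → ℝ} (h : ∑ i, w i = ∑ i, q i)
    (s : Finset (Fin d)) : ∑ i ∈ s, (w i - q i) ≤ 1 / 2 * ∑ i, |w i - q i| := by
  have hcompl : ∑ i ∈ s, (w i - q i) = -∑ i ∈ sᶜ, (w i - q i) := by
    rw [eq_neg_iff_add_eq_zero, sum_add_sum_compl, sum_sub_distrib, h, sub_self]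
  have h1 : ∑ i ∈ s, (w i - q i) ≤ ∑ i ∈ s, |w i - q i| := sum_le_sum fun i _ => le_abs_self _
  have h2 : -∑ i ∈ sᶜ, (w i - q i) ≤ ∑ i ∈ sᶜ, |w i - q i| := by
    rw [← sum_neg_distrib]; exact sum_le_sum fun i _ => neg_le_abs _
  linarith [sum_add_sum_compl s fun i => |w i - q i|]

lemma half_sum_abs_sub_eq_of_le_of_ne {p q : Fin d → ℝ} (i₀ : Fin d) (hle : ∀ i, i ≠ i₀ → p i ≤ q i)
    (h : ∑ i, p i = ∑ i, q i) : 1 / 2 * ∑ i, |p i - q i| = p i₀ - q i₀ := by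
  have hrest : ∑ i ∈ univ.erase i₀, (q i - p i) = p i₀ - q i₀ := by
    linarith [add_sum_erase univ (fun i => q i - p i) (mem_univ i₀),
      sum_sub_distrib (s := univ) q p]
  have hpos : 0 ≤ p i₀ - q i₀ :=
    hrest ▸ sum_nonneg fun i hi => sub_nonneg.2 (hle i (ne_of_mem_erase hi))
  have habs : ∑ i ∈ univ.erase i₀, |p i - q i| = ∑ i ∈ univ.erase i₀, (q i - p i) :=
    sum_congr rfl fun i hi => by
      rw [abs_sub_comm, abs_of_nonneg (sub_nonneg.2 (hle i (ne_of_mem_erase hi)))]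
  rw [← add_sum_erase univ _ (mem_univ i₀), habs, hrest, abs_of_nonneg hpos]
  ring

def epsBall (q : Fin d → ℝ) (ε : ℝ) : Set (Fin d → ℝ) :=
  {p | (∀ i, 0 ≤ p i) ∧ ∑ i, p i = 1 ∧ 1 / 2 * ∑ i, |p i - q i| ≤ ε}

lemma kMaxSum_le_headSum_add {q w : Fin d → ℝ} {ε : ℝ} (hq : Antitone q) (hq1 : ∑ i, q i = 1)
    (hw : w ∈ epsBall q ε) {k : ℕ} (hk : k < d) : kMaxSum w k ≤ headSum q k + ε :=
  kMaxSum_le hk.le fun s hs => by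
    have htv := (sum_sub_le_half_sum_abs_sub (hw.2.1.trans hq1.symm) s).trans hw.2.2
    have hsort := sum_le_headSum_of_antitone hq hk hs
    rw [sum_sub_distrib] at htv
    linarith

lemma vMaj_of_min_le_headSum {q p w : Fin d → ℝ} {ε : ℝ} (hq : Antitone q) (hq1 : ∑ i, q i = 1)
    (hp1 : ∑ i, p i = 1)
    (hhead : ∀ k, 1 ≤ k → k ≤ d - 1 → min 1 (headSum q k + ε) ≤ headSum p k)
    (hw : w ∈ epsBall q ε) : vMaj w p := by
  refine ⟨fun k hk1 hkd => ?_, hw.2.1.trans hp1.symm⟩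
  have hk : k < d := by omega
  calc kMaxSum w k
      ≤ min 1 (headSum q k + ε) :=
        le_min (hw.2.1 ▸ kMaxSum_le_sum hw.1 hk.le) (kMaxSum_le_headSum_add hq hq1 hw hk)
    _ ≤ headSum p k := hhead k hk1 hkd
    _ ≤ kMaxSum p k := headSum_le_kMaxSum p hk.le

/-- The vector `p_{*,ε}(q)` with cut index `m = d - ℓ - 1`, or `m = d - 1` when `q_d > ε`
(entries are `0`-based); its `m`-th entry `q_m - (ε - Q_ℓ)` is written as
`1 - ε - (q_0 + ⋯ + q_{m-1})`, using `∑ q = 1`. -/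
def pstar (q : Fin d → ℝ) (ε : ℝ) (m : ℕ) : Fin d → ℝ := fun i =>
  if i.val = 0 then q i + ε
  else if i.val < m then q i
  else if i.val = m then 1 - ε - headSum q m
  else 0

section pstar
variable {q : Fin d → ℝ} {ε : ℝ} {m : ℕ}

lemma headSum_pstar_of_le (hm : m < d) {k : ℕ} (hk1 : 1 ≤ k) (hkm : k ≤ m) :
    headSum (pstar q ε m) k = headSum q k + ε := by
  have hd : 0 < d := by omega
  have hshift := headSum_sub_headSum_of_eqOn (v := pstar q ε m) (w := q) hk1 fun i hi hik => by
    simp only [pstar]; rw [if_neg (by omega), if_pos (by omega)]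
  rw [headSum_one _ hd, headSum_one _ hd] at hshift
  simp only [pstar, if_pos] at hshift
  linarith

lemma headSum_pstar_of_lt (hm0 : 0 < m) (hm : m < d) {k : ℕ} (hmk : m < k) :
    headSum (pstar q ε m) k = 1 := by
  rw [headSum_eq_of_eq_zero hmk fun i hi _ => by
      simp only [pstar]; rw [if_neg (by omega), if_neg (by omega), if_neg (by omega)],
    headSum_succ _ hm, headSum_pstar_of_le hm hm0 le_rfl]
  simp only [pstar]; rw [if_neg (by omega), if_neg (by omega), if_pos trivial]
  ring

lemma sum_pstar (hm0 : 0 < m) (hm : m < d) : ∑ i, pstar q ε m i = 1 := by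
  rw [← headSum_eq_sum_of_le _ le_rfl, headSum_pstar_of_lt hm0 hm hm]

lemma pstar_le_of_ne_zero (hq0 : ∀ i, 0 ≤ q i) (hm : m < d) (hhigh : 1 - ε ≤ headSum q (m + 1))
    (i : Fin d) (hi : i ≠ ⟨0, by omega⟩) : pstar q ε m i ≤ q i := by
  have hi0 : i.val ≠ 0 := fun h => hi (Fin.ext h)
  rw [headSum_succ _ hm] at hhigh
  simp only [pstar, if_neg hi0]
  split_ifs with him him'
  · exact le_rfl
  · obtain rfl : i = ⟨m, hm⟩ := Fin.ext him'
    linarith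
  · exact hq0 i

lemma pstar_nonneg (hq0 : ∀ i, 0 ≤ q i) (hε : 0 ≤ ε) (hlow : headSum q m < 1 - ε) (i : Fin d) :
    0 ≤ pstar q ε m i := by
  simp only [pstar]
  split_ifs
  · linarith [hq0 i]
  · exact hq0 i
  · linarith
  · exact le_rfl

lemma pstar_mem_epsBall (hq0 : ∀ i, 0 ≤ q i) (hq1 : ∑ i, q i = 1) (hε : 0 ≤ ε) (hm0 : 0 < m)
    (hm : m < d) (hlow : headSum q m < 1 - ε) (hhigh : 1 - ε ≤ headSum q (m + 1)) :
    pstar q ε m ∈ epsBall q ε := by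
  refine ⟨pstar_nonneg hq0 hε hlow, sum_pstar hm0 hm, ?_⟩
  rw [half_sum_abs_sub_eq_of_le_of_ne _ (pstar_le_of_ne_zero hq0 hm hhigh)
    ((sum_pstar hm0 hm).trans hq1.symm)]
  simp [pstar]

lemma vMaj_pstar (hq : Antitone q) (hq1 : ∑ i, q i = 1) (hm0 : 0 < m) (hm : m < d)
    {w : Fin d → ℝ} (hw : w ∈ epsBall q ε) : vMaj w (pstar q ε m) := by
  refine vMaj_of_min_le_headSum hq hq1 (sum_pstar hm0 hm) (fun k hk1 hkd => ?_) hw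
  rcases le_or_gt k m with hkm | hmk
  · exact (min_le_right _ _).trans (headSum_pstar_of_le hm hk1 hkm).ge
  · exact (min_le_left _ _).trans (headSum_pstar_of_lt hm0 hm hmk).ge

lemma pstar_mem_epsBall_and_vMaj (hq : Antitone q) (hq0 : ∀ i, 0 ≤ q i) (hq1 : ∑ i, q i = 1)
    (hε : 0 ≤ ε) (hm0 : 0 < m) (hm : m < d) (hlow : headSum q m < 1 - ε)
    (hhigh : 1 - ε ≤ headSum q (m + 1)) :
    pstar q ε m ∈ epsBall q ε ∧ ∀ w ∈ epsBall q ε, vMaj w (pstar q ε m) :=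
  ⟨pstar_mem_epsBall hq0 hq1 hε hm0 hm hlow hhigh, fun _ => vMaj_pstar hq hq1 hm0 hm⟩

lemma pstar_sub_one_eq (hd : 2 ≤ d) (hq1 : ∑ i, q i = 1) :
    pstar q ε (d - 1) = fun i : Fin d =>
      if i.val = 0 then q i + ε else if i.val = d - 1 then q i - ε else q i := by
  have hm : d - 1 < d := by omega
  have hlast := headSum_succ q hm
  rw [Nat.sub_add_cancel (by omega), headSum_eq_sum_of_le q le_rfl, hq1] at hlast
  funext i
  simp only [pstar]
  split_ifs <;> try first | rfl | omega
  obtain rfl : i = ⟨d - 1, hm⟩ := Fin.ext (by omega)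
  linarith

lemma pstar_sub_sub_one_eq (hq1 : ∑ i, q i = 1) {ℓ : ℕ} (hℓ : ℓ < d - 1) :
    pstar q ε (d - ℓ - 1) = fun i : Fin d =>
      if i.val = 0 then q i + ε
      else if i.val < d - ℓ - 1 then q i
      else if i.val = d - ℓ - 1 then q i - (ε - Qsum q ℓ)
      else 0 := by
  have hm : d - ℓ - 1 < d := by omega
  have hcut := headSum_succ q hm
  rw [show d - ℓ - 1 + 1 = d - ℓ by omega, headSum_eq_one_sub_Qsum hq1] at hcut
  funext i
  simp only [pstar]
  split_ifs <;> try first | rfl | omega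
  obtain rfl : i = ⟨d - ℓ - 1, hm⟩ := Fin.ext (by omega)
  linarith

end pstar

def unitVecZero (d : ℕ) : Fin d → ℝ := fun i => if i.val = 0 then 1 else 0

lemma headSum_unitVecZero (hd : 0 < d) {k : ℕ} (hk : 1 ≤ k) : headSum (unitVecZero d) k = 1 := by
  rw [headSum_eq_of_eq_zero (v := unitVecZero d) hk fun i hi _ => if_neg (by omega),
    headSum_one _ hd]
  exact if_pos rfl

lemma unitVecZero_mem_epsBall {q : Fin d → ℝ} {ε : ℝ} (hq0 : ∀ i, 0 ≤ q i) (hq1 : ∑ i, q i = 1)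
    (hd : 0 < d) (hhigh : 1 - ε ≤ q ⟨0, hd⟩) : unitVecZero d ∈ epsBall q ε := by
  have hsum : ∑ i, unitVecZero d i = 1 := by
    rw [← headSum_eq_sum_of_le _ le_rfl, headSum_unitVecZero hd hd]
  have hle (i : Fin d) (hi : i ≠ ⟨0, hd⟩) : unitVecZero d i ≤ q i :=
    (if_neg fun h => hi (Fin.ext h)).trans_le (hq0 i)
  refine ⟨fun i => by simp only [unitVecZero]; split_ifs <;> norm_num, hsum, ?_⟩
  rw [half_sum_abs_sub_eq_of_le_of_ne _ hle (hsum.trans hq1.symm)]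
  simp only [unitVecZero, if_pos]
  linarith

lemma vMaj_unitVecZero {q w : Fin d → ℝ} {ε : ℝ} (hq : Antitone q) (hq1 : ∑ i, q i = 1)
    (hd : 0 < d) (hw : w ∈ epsBall q ε) : vMaj w (unitVecZero d) :=
  vMaj_of_min_le_headSum hq hq1 (by rw [← headSum_eq_sum_of_le _ le_rfl, headSum_unitVecZero hd hd])
    (fun _ hk1 _ => (min_le_left _ _).trans (headSum_unitVecZero hd hk1).ge) hw

end

/-- The vector `p_{*,ε}(q)` of Definition 13 lies in `B_ε(q)` and majorizes
every `p ∈ B_ε(q)`. The hypothesis `hp` encodes the case analysis in the definition of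
`p_{*,ε}(q)`. -/
theorem pstar_maximal_in_majorization
    {d : ℕ} (hd : 2 ≤ d) (q : Fin d → ℝ)
    (hq0 : ∀ i, 0 ≤ q i) (hq1 : ∑ i, q i = 1)
    (hsort : ∀ i j : Fin d, i ≤ j → q j ≤ q i)
    (ε : ℝ) (hε : ε ∈ Set.Ioc (0 : ℝ) 1)
    (p : Fin d → ℝ)
    (hp :
      -- Case `q_d > ε`:
      ((∀ i : Fin d, (i : ℕ) = d - 1 → ε < q i) ∧
        p = fun i : Fin d =>
          if (i : ℕ) = 0 then q i + ε else if (i : ℕ) = d - 1 then q i - ε else q i) ∨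
      -- Case `q_d ≤ ε`, with `ℓ` the largest index in `{1, …, d−1}` such that `Q_ℓ ≤ ε`:
      (∃ ℓ : ℕ, 1 ≤ ℓ ∧ ℓ ≤ d - 1 ∧
        (∀ i : Fin d, (i : ℕ) = d - 1 → q i ≤ ε) ∧
        Qsum q ℓ ≤ ε ∧ (∀ ℓ' : ℕ, ℓ < ℓ' → ℓ' ≤ d - 1 → ε < Qsum q ℓ') ∧
        ((ℓ = d - 1 ∧ p = fun i : Fin d => if (i : ℕ) = 0 then 1 else 0) ∨
         (ℓ < d - 1 ∧ p = fun i : Fin d =>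
            if (i : ℕ) = 0 then q i + ε
            else if (i : ℕ) < d - ℓ - 1 then q i
            else if (i : ℕ) = d - ℓ - 1 then q i - (ε - Qsum q ℓ)
            else 0)))) :
    ((∀ i, 0 ≤ p i) ∧ ∑ i, p i = 1 ∧ (1 / 2 : ℝ) * ∑ i, |p i - q i| ≤ ε) ∧
    (∀ w : Fin d → ℝ, (∀ i, 0 ≤ w i) → ∑ i, w i = 1 →
      (1 / 2 : ℝ) * ∑ i, |w i - q i| ≤ ε → vMaj w p) := by
  obtain ⟨hε, -⟩ := hε
  have hd0 : 0 < d := by omega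
  have hq : Antitone q := fun i j hij => hsort i j hij
  suffices h : p ∈ epsBall q ε ∧ ∀ w ∈ epsBall q ε, vMaj w p from
    ⟨h.1, fun w hw0 hw1 hwq => h.2 w ⟨hw0, hw1, hwq⟩⟩
  rcases hp with ⟨hqd, rfl⟩ | ⟨ℓ, hℓ1, hℓd, -, hQ, hQmax, ⟨rfl, rfl⟩ | ⟨hℓ, rfl⟩⟩
  · have hm : d - 1 < d := by omega
    have hlast := headSum_succ q hm
    rw [Nat.sub_add_cancel (by omega), headSum_eq_sum_of_le q le_rfl, hq1] at hlast
    rw [← pstar_sub_one_eq hd hq1]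
    refine pstar_mem_epsBall_and_vMaj hq hq0 hq1 hε.le (by omega) hm ?_ ?_
    · linarith [hqd ⟨d - 1, hm⟩ rfl]
    · rw [Nat.sub_add_cancel (by omega), headSum_eq_sum_of_le q le_rfl, hq1]; linarith
  · have hfirst := headSum_eq_one_sub_Qsum hq1 (d - 1)
    rw [Nat.sub_sub_self (by omega), headSum_one q hd0] at hfirst
    exact ⟨unitVecZero_mem_epsBall hq0 hq1 hd0 (by linarith),
      fun w hw => vMaj_unitVecZero hq hq1 hd0 hw⟩
  · have hlow := headSum_eq_one_sub_Qsum hq1 (ℓ + 1)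
    have hhigh := headSum_eq_one_sub_Qsum hq1 ℓ
    rw [← Nat.sub_sub] at hlow
    rw [← Nat.sub_add_cancel (show 1 ≤ d - ℓ by omega)] at hhigh
    rw [← pstar_sub_sub_one_eq hq1 hℓ]
    refine pstar_mem_epsBall_and_vMaj hq hq0 hq1 hε.le (by omega) (by omega) ?_ ?_
    · linarith [hQmax (ℓ + 1) (by omega) (by omega)]
    · linarith
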